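/- arXiv:2004.09962 — 2 statements merged into one kernel-verified Lean document; each statement's English description precedes it below -/
import Mathlib

section
/- The set of isometry classes of nonempty compact totally disconnected metric spaces whose distance function is injective is residual (comeager) in the space M_0, where M_0 is the subset of the Gromov–Hausdorff space consisting of classes of totally disconnected compact metric spaces, equipped with the subspace topology. -/
/-!
For `c > 0`, the classes of spaces containing points `x, y, x'` at mutual distances at least `c`
and a point `y'` with `dist x y = dist x' y'` form a closed subset of the Gromov–Hausdorff space:
such configurations are detected by a continuous defect function, which almost-isometries
change by little. A space has injective distance exactly when it lies in none of these sets for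
`c = 1 / (n + 1)`, so it remains to see that their complements are dense in `M₀`. Finite spaces
are dense, and lengthening each nonzero distance of a finite space by a generic amount in
`[ε, 2ε]` keeps the triangle inequality and makes all distances distinct.
-/

/-- The distance function of a metric space is injective: it is one-to-one on unordered pairs of
distinct points, i.e. whenever `x ≠ y`, `x' ≠ y'` and `dist x y = dist x' y'`, the unordered
pairs `{x, y}` and `{x', y'}` coincide. -/
def InjectiveDist (X : Type*) [MetricSpace X] : Prop :=
  ∀ x y x' y' : X, x ≠ y → x' ≠ y' → dist x y = dist x' y' → ({x, y} : Set X) = {x', y'}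

open GromovHausdorff Metric Set Function

section InjectiveDist

variable {X Y : Type*} [MetricSpace X] [MetricSpace Y]

theorem InjectiveDist.of_isometry {f : X → Y} (hf : Isometry f) (h : InjectiveDist Y) :
    InjectiveDist X := by
  intro x y x' y' hxy hxy' hd
  have himage := h (f x) (f y) (f x') (f y') (hf.injective.ne hxy) (hf.injective.ne hxy')
    (by rw [hf.dist_eq, hf.dist_eq, hd])
  rwa [← image_pair, ← image_pair, image_eq_image hf.injective] at himage

def HasSeparatedCoincidence (X : Type*) [MetricSpace X] (c : ℝ) : Prop :=
  ∃ x y x' y' : X, dist x y = dist x' y' ∧ c ≤ dist x y ∧ c ≤ dist x' x ∧ c ≤ dist x' y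

theorem InjectiveDist.not_hasSeparatedCoincidence (h : InjectiveDist X) {c : ℝ} (hc : 0 < c) :
    ¬ HasSeparatedCoincidence X c := by
  rintro ⟨x, y, x', y', hd, hxy, hx'x, hx'y⟩
  have hne : x ≠ y := dist_pos.1 (hc.trans_le hxy)
  have hne' : x' ≠ y' := dist_pos.1 (hc.trans_le (hd ▸ hxy))
  have hx' : x' ∈ ({x, y} : Set X) := h x y x' y' hne hne' hd ▸ mem_insert x' {y'}
  rcases hx' with rfl | rfl
  · simp only [dist_self] at hx'x; linarith
  · simp only [dist_self] at hx'y; linarith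

theorem injectiveDist_of_forall_not_hasSeparatedCoincidence
    (h : ∀ n : ℕ, ¬ HasSeparatedCoincidence X (1 / (n + 1))) : InjectiveDist X := by
  have absurd_of_third_point :
      ∀ x y x' y' : X, x ≠ y → dist x y = dist x' y' → x' ≠ x → x' ≠ y → False := by
    intro x y x' y' hxy hd hx'x hx'y
    obtain ⟨n, hn⟩ := exists_nat_one_div_lt (lt_min (dist_pos.2 hxy)
      (lt_min (dist_pos.2 hx'x) (dist_pos.2 hx'y)))
    simp only [lt_min_iff] at hn
    exact h n ⟨x, y, x', y', hd, hn.1.le, hn.2.1.le, hn.2.2.le⟩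
  intro x y x' y' hxy hxy' hd
  by_contra hne
  rw [pair_eq_pair_iff] at hne
  by_cases hx' : x' = x ∨ x' = y
  · refine absurd_of_third_point x y y' x' hxy (by rw [hd, dist_comm]) ?_ ?_ <;> grind
  · exact absurd_of_third_point x y x' y' hxy hd (by tauto) (by tauto)

end InjectiveDist

section CoincidenceDefect

variable {X Y : Type*} [MetricSpace X] [MetricSpace Y] (c : ℝ)

def coincidenceDefect (x y x' y' : X) : ℝ :=
  max (max |dist x y - dist x' y'| (c - dist x y)) (max (c - dist x' x) (c - dist x' y))

variable {c}

theorem coincidenceDefect_nonpos_iff {x y x' y' : X} :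
    coincidenceDefect c x y x' y' ≤ 0 ↔
      dist x y = dist x' y' ∧ c ≤ dist x y ∧ c ≤ dist x' x ∧ c ≤ dist x' y := by
  simp only [coincidenceDefect, max_le_iff, abs_nonpos_iff, sub_eq_zero, sub_nonpos, and_assoc]

theorem continuous_coincidenceDefect :
    Continuous fun z : X × X × X × X => coincidenceDefect c z.1 z.2.1 z.2.2.1 z.2.2.2 := by
  unfold coincidenceDefect
  fun_prop

theorem coincidenceDefect_comp_le {f : Y → X} {η : ℝ}
    (hf : ∀ a b, |dist (f a) (f b) - dist a b| ≤ η) (x y x' y' : Y) :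
    coincidenceDefect c (f x) (f y) (f x') (f y') ≤ coincidenceDefect c x y x' y' + 2 * η := by
  have h₁ := abs_le.1 (hf x y)
  have h₂ := abs_le.1 (hf x' y')
  have h₃ := abs_le.1 (hf x' x)
  have h₄ := abs_le.1 (hf x' y)
  set M := coincidenceDefect c x y x' y'
  have hM : |dist x y - dist x' y'| ≤ M ∧ c - dist x y ≤ M ∧ c - dist x' x ≤ M ∧
      c - dist x' y ≤ M :=
    ⟨le_max_of_le_left (le_max_left _ _), le_max_of_le_left (le_max_right _ _),
      le_max_of_le_right (le_max_left _ _), le_max_of_le_right (le_max_right _ _)⟩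
  have hA : |dist (f x) (f y) - dist (f x') (f y')| ≤ M + 2 * η := by
    refine abs_le.2 ⟨?_, ?_⟩ <;> linarith [abs_le.1 hM.1]
  simp only [coincidenceDefect, max_le_iff]
  refine ⟨⟨hA, ?_⟩, ?_, ?_⟩ <;> linarith

theorem exists_pos_le_coincidenceDefect [CompactSpace X]
    (h : ¬ HasSeparatedCoincidence X c) :
    ∃ δ > 0, ∀ x y x' y' : X, δ ≤ coincidenceDefect c x y x' y' := by
  rcases isEmpty_or_nonempty X with hX | hX
  · exact ⟨1, one_pos, fun x => isEmptyElim x⟩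
  obtain ⟨z, -, hz⟩ := isCompact_univ.exists_isMinOn univ_nonempty
    (continuous_coincidenceDefect (X := X) (c := c)).continuousOn
  refine ⟨_, not_le.1 fun hle => h ⟨_, _, _, _, coincidenceDefect_nonpos_iff.1 hle⟩,
    fun x y x' y' => hz (mem_univ (x, y, x', y'))⟩

end CoincidenceDefect

namespace GromovHausdorff

theorem exists_distortion_le_of_dist_lt {p q : GHSpace} {ε : ℝ} (h : dist p q < ε) :
    ∃ f : q.Rep → p.Rep, ∀ a b, |dist (f a) (f b) - dist a b| ≤ 2 * ε := by
  obtain ⟨Φ, Ψ, hΦ, hΨ, hD⟩ := ghDist_eq_hausdorffDist p.Rep q.Rep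
  rw [← dist_ghDist] at hD
  have hfin : hausdorffEDist (range Φ) (range Ψ) ≠ ⊤ :=
    hausdorffEDist_ne_top_of_nonempty_of_bounded (range_nonempty _) (range_nonempty _)
      (isCompact_range hΦ.continuous).isBounded (isCompact_range hΨ.continuous).isBounded
  have hclose : ∀ a : q.Rep, ∃ x : p.Rep, dist (Φ x) (Ψ a) < ε := by
    intro a
    obtain ⟨_, ⟨x, rfl⟩, hx⟩ :=
      exists_dist_lt_of_hausdorffDist_lt' (mem_range_self a) (hD ▸ h) hfin
    exact ⟨x, hx⟩
  choose f hf using hclose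
  refine ⟨f, fun a b => abs_le.2 ⟨?_, ?_⟩⟩
  · have := dist_triangle4 (Ψ a) (Φ (f a)) (Φ (f b)) (Ψ b)
    rw [dist_comm (Ψ a) (Φ (f a)), hΦ.dist_eq, hΨ.dist_eq] at this
    linarith [hf a, hf b]
  · have := dist_triangle4 (Φ (f a)) (Ψ a) (Ψ b) (Φ (f b))
    rw [dist_comm (Ψ b) (Φ (f b)), hΦ.dist_eq, hΨ.dist_eq] at this
    linarith [hf a, hf b]

theorem isClosed_setOf_hasSeparatedCoincidence (c : ℝ) :
    IsClosed {p : GHSpace | HasSeparatedCoincidence p.Rep c} := by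
  refine isOpen_compl_iff.1 (Metric.isOpen_iff.2 fun p hp => ?_)
  obtain ⟨δ, hδ, hpδ⟩ := exists_pos_le_coincidenceDefect hp
  refine ⟨δ / 5, by positivity, fun q hq ⟨x, y, x', y', hxy⟩ => ?_⟩
  obtain ⟨f, hf⟩ := exists_distortion_le_of_dist_lt (mem_ball'.1 hq)
  have := coincidenceDefect_comp_le (c := c) hf x y x' y'
  linarith [hpδ (f x) (f y) (f x') (f y'), coincidenceDefect_nonpos_iff.2 hxy]

end GromovHausdorff

theorem exists_injective_add_of_lt {ι : Type*} [Finite ι] (g : ι → ℝ) {a b : ℝ} (hab : a < b) :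
    ∃ u : ι → ℝ, (∀ i, u i ∈ Icc a b) ∧ Injective (g + u) := by
  obtain ⟨m, hm⟩ := Countable.exists_injective_nat ι
  have : Infinite (Icc (0 : ℝ) 1) := (Icc_infinite zero_lt_one).to_subtype
  set k : ι → ℝ := fun i => Infinite.natEmbedding (Icc (0 : ℝ) 1) (m i)
  have hk : Injective k :=
    Subtype.val_injective.comp ((Infinite.natEmbedding _).injective.comp hm)
  have hk01 : ∀ i, k i ∈ Icc (0 : ℝ) 1 := fun i => Subtype.prop _
  -- for `i ≠ j`, the slope `θ` at which `g + θ • k` takes equal values at `i` and `j`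
  set slope : ι × ι → ℝ := fun ij => (g ij.2 - g ij.1) / (k ij.1 - k ij.2)
  obtain ⟨θ, ⟨hθ0, hθ⟩, hθslope⟩ :=
    ((Ioo_infinite (sub_pos.2 hab)).sdiff (finite_range slope)).nonempty
  refine ⟨fun i => a + θ * k i, fun i => ⟨?_, ?_⟩, fun i j hij => ?_⟩
  · nlinarith [(hk01 i).1]
  · nlinarith [(hk01 i).2]
  · by_contra hne
    have hkne : k i - k j ≠ 0 := sub_ne_zero.2 (hk.ne hne)
    refine hθslope ⟨(i, j), ?_⟩
    simp only [Pi.add_apply] at hij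
    rw [div_eq_iff hkne]
    linarith

section PerturbedDist

variable {X : Type*} [MetricSpace X] {u : Sym2 X → ℝ}

open scoped Classical in
noncomputable def perturbedDist (u : Sym2 X → ℝ) (x y : X) : ℝ :=
  if x = y then 0 else dist x y + u s(x, y)

@[simp]
theorem perturbedDist_self (x : X) : perturbedDist u x x = 0 := if_pos rfl

theorem perturbedDist_of_ne {x y : X} (h : x ≠ y) : perturbedDist u x y = dist x y + u s(x, y) :=
  if_neg h

theorem perturbedDist_comm (x y : X) : perturbedDist u x y = perturbedDist u y x := by
  by_cases h : x = y
  · rw [h]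
  · rw [perturbedDist_of_ne h, perturbedDist_of_ne (Ne.symm h), dist_comm, Sym2.eq_swap]

theorem perturbedDist_nonneg (hu : ∀ p, 0 ≤ u p) (x y : X) : 0 ≤ perturbedDist u x y := by
  by_cases h : x = y
  · rw [h, perturbedDist_self]
  · rw [perturbedDist_of_ne h]
    exact add_nonneg dist_nonneg (hu _)

theorem perturbedDist_triangle (hu : ∀ p q r, u p ≤ u q + u r) (x y z : X) :
    perturbedDist u x z ≤ perturbedDist u x y + perturbedDist u y z := by
  have hu₀ : ∀ p, 0 ≤ u p := fun p => by linarith [hu p p p]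
  by_cases hxz : x = z
  · rw [hxz, perturbedDist_self]
    exact add_nonneg (perturbedDist_nonneg hu₀ _ _) (perturbedDist_nonneg hu₀ _ _)
  by_cases hxy : x = y
  · rw [hxy, perturbedDist_self, zero_add]
  by_cases hyz : y = z
  · rw [hyz, perturbedDist_self, add_zero]
  rw [perturbedDist_of_ne hxz, perturbedDist_of_ne hxy, perturbedDist_of_ne hyz]
  linarith [dist_triangle x y z, hu s(x, z) s(x, y) s(y, z)]

theorem eq_of_perturbedDist_eq_zero (hu : ∀ p, 0 ≤ u p) {x y : X} (h : perturbedDist u x y = 0) :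
    x = y := by
  by_contra hne
  rw [perturbedDist_of_ne hne] at h
  linarith [dist_pos.2 hne, hu s(x, y)]

theorem abs_perturbedDist_sub_dist_le {ε : ℝ} (hu : ∀ p, u p ∈ Icc 0 ε) (x y : X) :
    |perturbedDist u x y - dist x y| ≤ ε := by
  have hε : 0 ≤ ε := (hu s(x, x)).1.trans (hu s(x, x)).2
  by_cases h : x = y
  · simpa [h] using hε
  · rw [perturbedDist_of_ne h, add_sub_cancel_left, abs_of_nonneg (hu _).1]
    exact (hu _).2

end PerturbedDist

def PerturbedDist (X : Type*) (_u : Sym2 X → ℝ) : Type _ := X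

namespace PerturbedDist

variable {X : Type*} [MetricSpace X] {u : Sym2 X → ℝ}

def toPerturbed : X ≃ PerturbedDist X u := Equiv.refl X

instance [Finite X] : Finite (PerturbedDist X u) := ‹Finite X›

instance [Nonempty X] : Nonempty (PerturbedDist X u) := ‹Nonempty X›

variable [hu : Fact (∀ p q r, u p ≤ u q + u r)]

omit [MetricSpace X] in
theorem perturbation_nonneg (p : Sym2 X) : 0 ≤ u p := by linarith [hu.out p p p]

noncomputable instance : MetricSpace (PerturbedDist X u) where
  dist := perturbedDist (X := X) u
  dist_self := perturbedDist_self (X := X)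
  dist_comm := perturbedDist_comm (X := X)
  dist_triangle := perturbedDist_triangle (X := X) hu.out
  eq_of_dist_eq_zero := eq_of_perturbedDist_eq_zero (X := X) perturbation_nonneg

theorem dist_toPerturbed (x y : X) :
    dist (toPerturbed x : PerturbedDist X u) (toPerturbed y) = perturbedDist u x y := rfl

theorem injectiveDist
    (h : ∀ x y x' y' : X, dist x y + u s(x, y) = dist x' y' + u s(x', y') → s(x, y) = s(x', y')) :
    InjectiveDist (PerturbedDist X u) := by
  refine toPerturbed.surjective.forall₂.2 fun x y => toPerturbed.surjective.forall₂.2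
    fun x' y' hxy hxy' hd => ?_
  rw [Ne, toPerturbed.apply_eq_iff_eq] at hxy hxy'
  rw [dist_toPerturbed, dist_toPerturbed, perturbedDist_of_ne hxy, perturbedDist_of_ne hxy'] at hd
  simpa only [pair_eq_pair_iff, toPerturbed.apply_eq_iff_eq, ← Sym2.eq_iff] using h x y x' y' hd

theorem ghDist_le [Finite X] [Nonempty X] {ε : ℝ} (huε : ∀ p, u p ≤ ε) :
    ghDist X (PerturbedDist X u) ≤ ε / 2 := by
  have := ghDist_le_of_approx_subsets (s := univ) (fun x => toPerturbed (u := u) x.1)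
    (ε₁ := 0) (ε₃ := 0) (ε₂ := ε) (fun x => ⟨x, mem_univ x, (dist_self x).le⟩)
    (fun x => ⟨⟨toPerturbed.symm x, mem_univ _⟩, by rw [Equiv.apply_symm_apply, dist_self]⟩)
    (fun x y => ?_)
  · linarith
  rw [abs_sub_comm, Subtype.dist_eq, dist_toPerturbed]
  exact abs_perturbedDist_sub_dist_le (fun p => ⟨perturbation_nonneg p, huε p⟩) _ _

end PerturbedDist

namespace GromovHausdorff

theorem nonempty_isometryEquiv_rep_toGHSpace (X : Type*) [MetricSpace X] [CompactSpace X]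
    [Nonempty X] : Nonempty ((toGHSpace X).Rep ≃ᵢ X) := by
  rw [← toGHSpace_eq_toGHSpace_iff_isometryEquiv, GHSpace.toGHSpace_rep]

theorem dist_toGHSpace (p : GHSpace) (X : Type*) [MetricSpace X] [CompactSpace X] [Nonempty X] :
    dist p (toGHSpace X) = ghDist p.Rep X := by
  rw [ghDist, p.toGHSpace_rep]

theorem exists_finite_dist_le (p : GHSpace) {ε : ℝ} (hε : 0 < ε) :
    ∃ q : GHSpace, Finite q.Rep ∧ dist p q ≤ ε := by
  obtain ⟨s, -, hs, hcover⟩ := finite_cover_balls_of_compact (X := p.Rep) isCompact_univ hε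
  have hnear : ∀ x : p.Rep, ∃ y ∈ s, dist x y ≤ ε := fun x => by
    obtain ⟨y, hy, hxy⟩ := mem_iUnion₂.1 (hcover (mem_univ x))
    exact ⟨y, hy, (mem_ball.1 hxy).le⟩
  have : Finite s := hs.to_subtype
  have : Nonempty s := by
    obtain ⟨y, hy, -⟩ := hnear (Classical.arbitrary _)
    exact ⟨⟨y, hy⟩⟩
  obtain ⟨e⟩ := nonempty_isometryEquiv_rep_toGHSpace s
  refine ⟨toGHSpace s, Finite.of_equiv _ e.symm.toEquiv, ?_⟩
  have := ghDist_le_of_approx_subsets (s := s) id (ε₂ := 0) (ε₃ := 0) hnear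
    (fun x => ⟨x, (dist_self x).le⟩) (fun x y => by simp)
  rw [dist_toGHSpace]
  linarith

theorem exists_finite_injectiveDist_dist_le (p : GHSpace) [Finite p.Rep] {ε : ℝ} (hε : 0 < ε) :
    ∃ q : GHSpace, Finite q.Rep ∧ InjectiveDist q.Rep ∧ dist p q ≤ ε := by
  obtain ⟨u, hu, hinj⟩ := exists_injective_add_of_lt
    (Sym2.lift ⟨fun x y : p.Rep => dist x y, dist_comm⟩) (by linarith : ε < 2 * ε)
  have : Fact (∀ a b c, u a ≤ u b + u c) :=
    ⟨fun a b c => by linarith [(hu a).2, (hu b).1, (hu c).1]⟩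
  obtain ⟨e⟩ := nonempty_isometryEquiv_rep_toGHSpace (PerturbedDist p.Rep u)
  refine ⟨_, Finite.of_equiv _ e.symm.toEquiv,
    (PerturbedDist.injectiveDist fun x y x' y' h => hinj ?_).of_isometry e.isometry, ?_⟩
  · simpa only [Pi.add_apply, Sym2.lift_mk] using h
  · rw [dist_toGHSpace]
    linarith [PerturbedDist.ghDist_le (X := p.Rep) fun a => (hu a).2]

theorem dense_setOf_injectiveDist :
    Dense {p : {q : GHSpace // TotallyDisconnectedSpace q.Rep} | InjectiveDist p.val.Rep} := by
  refine Metric.dense_iff.2 fun p r hr => ?_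
  obtain ⟨q₁, hq₁, hpq₁⟩ := exists_finite_dist_le p.val (by linarith : 0 < r / 3)
  obtain ⟨q₂, hq₂, hinj, hq₁q₂⟩ := exists_finite_injectiveDist_dist_le q₁ (by linarith : 0 < r / 3)
  refine ⟨⟨q₂, inferInstance⟩, ?_, hinj⟩
  rw [mem_ball, Subtype.dist_eq, dist_comm]
  linarith [dist_triangle p.val q₁ q₂]

end GromovHausdorff

/-- The set of isometry classes in `M₀` (the subspace of the Gromov–Hausdorff space consisting
of classes of totally disconnected compact metric spaces) of those spaces whose distance
function is injective is residual (comeager) in `M₀`. -/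
theorem injectiveDist_residual_in_M0 :
    {p : {q : GromovHausdorff.GHSpace // TotallyDisconnectedSpace q.Rep} |
        InjectiveDist p.val.Rep} ∈
      residual {q : GromovHausdorff.GHSpace // TotallyDisconnectedSpace q.Rep} := by
  have hresidual (n : ℕ) : {p : {q : GHSpace // TotallyDisconnectedSpace q.Rep} |
      ¬ HasSeparatedCoincidence p.val.Rep (1 / (n + 1))} ∈ residual _ :=
    residual_of_dense_open
      ((isClosed_setOf_hasSeparatedCoincidence _).preimage continuous_subtype_val).isOpen_compl
      (dense_setOf_injectiveDist.mono fun p hp => hp.not_hasSeparatedCoincidence (by positivity))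
  filter_upwards [countable_iInter_mem.2 hresidual] with p hp
  exact injectiveDist_of_forall_not_hasSeparatedCoincidence (mem_iInter.1 hp)
end

section
/- Fix a nonnegative integer n and positive integers N and M. Let 𝓜^N_M be the set of isometry classes in the Gromov–Hausdorff space of nonempty compact metric spaces (X, d) admitting a finite open cover 𝓤 = {U_1, …, U_k} such that every U_i has diameter less than 1/N, and such that for every (n+2)-element subfamily 𝓥 ⊆ 𝓤 and every U ∈ 𝓥, the infimum of d(x, y) over x ∈ U and y ∈ ⋂ (𝓥 \ {U}) is greater than 1/M (in particular this holds vacuously when the intersection is empty only if the stated infimum condition, interpreted as an infimum over an empty set being +∞, is satisfied). Then 𝓜^N_M is an open subset of the Gromov–Hausdorff space. -/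
/-!
Shrink the cover `U` of `X` to an open cover `W` with `closure (W i) ⊆ U i`. If `Y` is
Gromov–Hausdorff close to `X`, embed both isometrically in a common space so that every point of
`Y` is `η`-close to `X`, and cover `Y` by the preimages of the `η`-neighbourhoods of the `W i`.
These sets have diameter at most `diam (W i) + 2η`. A point of `Y` lying in the sets coming from
all `W j`, `j ∈ t`, is `η`-close to a point of `X` that is `2η`-close to every `W j`; by
compactness of `X` such a point is close to `⋂ j ∈ t, closure (W j) ⊆ ⋂ j ∈ t, U j`. Hence the
separation constants of the new cover are at most slightly smaller than those of `U`, and the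
finitely many strict inequalities defining `HasFineCover` survive for small `η`.
-/

open scoped ENNReal

/-- `HasFineCover X n N M` means `X` admits a finite open cover `U_1, …, U_k` of mesh `< 1/N`
such that for every `(n+2)`-element subfamily `𝓥` of the cover and every member `U` of `𝓥`,
the infimum (in `ℝ≥0∞`, so `+∞` over an empty range) of the distances between points of `U`
and points of the intersection of the other members of `𝓥` exceeds `1/M`. -/
def HasFineCover (X : Type*) [MetricSpace X] (n N M : ℕ) : Prop :=
  ∃ (k : ℕ) (U : Fin k → Set X),
    (∀ i, IsOpen (U i)) ∧ (⋃ i, U i) = Set.univ ∧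
    (∀ i, Metric.diam (U i) < 1 / (N : ℝ)) ∧
    ∀ s : Finset (Fin k), s.card = n + 2 → ∀ i ∈ s,
      (M : ℝ≥0∞)⁻¹ <
        ⨅ (x : X) (_ : x ∈ U i) (y : X) (_ : y ∈ ⋂ j ∈ s.erase i, U j), edist x y

open Metric Set Filter Topology GromovHausdorff

universe u v

theorem exists_pos_biInter_cthickening_subset {X ι : Type*} [PseudoMetricSpace X]
    [CompactSpace X]
    {A : ι → Set X} {t : Set ι} {O : Set X} (hO : IsOpen O)
    (hAO : ⋂ j ∈ t, closure (A j) ⊆ O) :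
    ∃ ε > 0, ⋂ j ∈ t, cthickening ε (A j) ⊆ O := by
  let V : Ioi (0 : ℝ) → Set X := fun ε => ⋂ j ∈ t, cthickening ε (A j)
  have hV : Monotone V := fun ε ε' h =>
    iInter₂_mono fun j _ => cthickening_mono (Subtype.coe_le_coe.2 h) _
  have hVclosed : ∀ ε, IsClosed (V ε) := fun ε =>
    isClosed_biInter fun j _ => isClosed_cthickening
  have hVinter : ⋂ ε, V ε = ⋂ j ∈ t, closure (A j) := by
    ext x
    simp only [V, closure_eq_iInter_cthickening, iInter_subtype, mem_Ioi, mem_iInter]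
    exact ⟨fun h j hj δ hδ => h δ hδ j hj, fun h δ hδ j hj => h j hj δ hδ⟩
  obtain ⟨⟨ε, hε⟩, hεO⟩ := exists_subset_nhds_of_isCompact' hV.directed_ge
    (fun ε => (hVclosed ε).isCompact) hVclosed
    fun x hx => hO.mem_nhds (hAO (hVinter ▸ hx))
  exact ⟨ε, hε, hεO⟩

theorem iInf_edist_le_iInf_edist_add {X Y : Type*} [PseudoMetricSpace X] [PseudoMetricSpace Y]
    {A B : Set X} {A' B' : Set Y} {r : ℝ}
    (h : ∀ x' ∈ A', ∀ y' ∈ B', ∃ x ∈ A, ∃ z ∈ B, dist x z ≤ dist x' y' + r) :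
    ⨅ x ∈ A, ⨅ z ∈ B, edist x z ≤ (⨅ x' ∈ A', ⨅ y' ∈ B', edist x' y') + ENNReal.ofReal r := by
  simp only [ENNReal.iInf_add]
  refine le_iInf₂ fun x' hx' => le_iInf₂ fun y' hy' => ?_
  obtain ⟨x, hx, z, hz, hxz⟩ := h x' hx' y' hy'
  calc ⨅ x ∈ A, ⨅ z ∈ B, edist x z ≤ edist x z := iInf₂_le_of_le x hx (iInf₂_le z hz)
    _ ≤ edist x' y' + ENNReal.ofReal r := by
      rw [edist_dist, edist_dist]
      exact (ENNReal.ofReal_le_ofReal hxz).trans ENNReal.ofReal_add_le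

section Coupling

variable {X Y Z : Type*} [PseudoMetricSpace Z] {Φ : X → Z} {Ψ : Y → Z} {η : ℝ}

theorem mem_preimage_thickening_image {A : Set X} {y : Y} :
    y ∈ Ψ ⁻¹' thickening η (Φ '' A) ↔ ∃ x ∈ A, dist (Φ x) (Ψ y) < η := by
  simp [mem_thickening_iff, dist_comm]

theorem iUnion_preimage_thickening_image_eq_univ {ι : Type*} {W : ι → Set X}
    (hW : ⋃ i, W i = univ) (hΦΨ : ∀ y, ∃ x, dist (Φ x) (Ψ y) < η) :
    ⋃ i, Ψ ⁻¹' thickening η (Φ '' W i) = univ := by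
  refine eq_univ_of_forall fun y => ?_
  obtain ⟨x, hx⟩ := hΦΨ y
  obtain ⟨i, hi⟩ := mem_iUnion.1 (hW ▸ mem_univ x)
  exact mem_iUnion.2 ⟨i, mem_preimage_thickening_image.2 ⟨x, hi, hx⟩⟩

theorem diam_preimage_thickening_image_le [PseudoMetricSpace X] [PseudoMetricSpace Y]
    (hΦ : Isometry Φ) (hΨ : Isometry Ψ) {A : Set X} (hA : Bornology.IsBounded A) (hη : 0 ≤ η) :
    diam (Ψ ⁻¹' thickening η (Φ '' A)) ≤ diam A + 2 * η :=
  calc diam (Ψ ⁻¹' thickening η (Φ '' A))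
      = diam (Ψ '' (Ψ ⁻¹' thickening η (Φ '' A))) := (hΨ.diam_image _).symm
    _ ≤ diam (thickening η (Φ '' A)) :=
      diam_mono (image_preimage_subset _ _) (hΦ.lipschitz.isBounded_image hA).thickening
    _ ≤ diam (Φ '' A) + 2 * η := diam_thickening_le _ hη
    _ = diam A + 2 * η := by rw [hΦ.diam_image]

theorem exists_dist_le_of_mem_preimage_thickening_image [PseudoMetricSpace X]
    [PseudoMetricSpace Y] {ι : Type*} (hΦ : Isometry Φ) (hΨ : Isometry Ψ)
    (hΦΨ : ∀ y, ∃ x, dist (Φ x) (Ψ y) < η) {A B : Set X} {W : ι → Set X} {t : Set ι} {τ : ℝ}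
    (hB : ⋂ j ∈ t, cthickening (2 * η) (W j) ⊆ thickening τ B) {x' y' : Y}
    (hx' : x' ∈ Ψ ⁻¹' thickening η (Φ '' A))
    (hy' : y' ∈ ⋂ j ∈ t, Ψ ⁻¹' thickening η (Φ '' W j)) :
    ∃ x ∈ A, ∃ z ∈ B, dist x z ≤ dist x' y' + (2 * η + τ) := by
  obtain ⟨x, hxA, hxx'⟩ := mem_preimage_thickening_image.1 hx'
  obtain ⟨x₀, hx₀y'⟩ := hΦΨ y'
  have hx₀ : x₀ ∈ ⋂ j ∈ t, cthickening (2 * η) (W j) := by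
    refine mem_iInter₂.2 fun j hj => ?_
    obtain ⟨w, hwW, hwy'⟩ := mem_preimage_thickening_image.1 (mem_iInter₂.1 hy' j hj)
    refine mem_cthickening_of_dist_le x₀ w _ _ hwW ?_
    have := dist_triangle_right (Φ x₀) (Φ w) (Ψ y')
    rw [hΦ.dist_eq] at this
    linarith
  obtain ⟨z, hzB, hx₀z⟩ := mem_thickening_iff.1 (hB hx₀)
  refine ⟨x, hxA, z, hzB, ?_⟩
  have := dist_triangle4 (Φ x) (Ψ x') (Ψ y') (Φ x₀)
  rw [hΦ.dist_eq, hΨ.dist_eq, dist_comm (Ψ y')] at this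
  linarith [dist_triangle x x₀ z]

end Coupling

theorem eventually_lt_iInf_edist_preimage_thickening_image {X ι : Type*} [PseudoMetricSpace X]
    [CompactSpace X] {U W : ι → Set X} (hWU : ∀ j, closure (W j) ⊆ U j) (i : ι) (t : Set ι)
    {c : ℝ≥0∞} (hc : c < ⨅ x ∈ U i, ⨅ z ∈ ⋂ j ∈ t, U j, edist x z) :
    ∀ᶠ η in 𝓝[>] 0, ∀ {Y : Type u} {Z : Type v} [MetricSpace Y] [MetricSpace Z]
      {Φ : X → Z} {Ψ : Y → Z}, Isometry Φ → Isometry Ψ → (∀ y, ∃ x, dist (Φ x) (Ψ y) < η) →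
      c < ⨅ x' ∈ Ψ ⁻¹' thickening η (Φ '' W i),
        ⨅ y' ∈ ⋂ j ∈ t, Ψ ⁻¹' thickening η (Φ '' W j), edist x' y' := by
  obtain ⟨r, hr, hcr⟩ := ENNReal.lt_iff_exists_add_pos_lt.1 hc
  have hr : (0 : ℝ) < r := hr
  obtain ⟨ε, hε, hεB⟩ := exists_pos_biInter_cthickening_subset (A := W) (t := t)
    (isOpen_thickening (δ := r / 2) (E := ⋂ j ∈ t, U j))
    ((biInter_mono subset_rfl fun j _ => hWU j).trans (self_subset_thickening (by positivity) _))
  filter_upwards [Ioo_mem_nhdsGT (lt_min (half_pos hε) (by positivity : (0 : ℝ) < r / 4))]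
    with η ⟨hη, hηε⟩ Y Z _ _ Φ Ψ hΦ hΨ hΦΨ
  have hηε := lt_min_iff.1 hηε
  have hB : ⋂ j ∈ t, cthickening (2 * η) (W j) ⊆ thickening (r / 2) (⋂ j ∈ t, U j) :=
    (biInter_mono subset_rfl fun j _ => cthickening_mono (by linarith) _).trans hεB
  have hsep := iInf_edist_le_iInf_edist_add fun x' hx' y' hy' =>
    (exists_dist_le_of_mem_preimage_thickening_image hΦ hΨ hΦΨ hB hx' hy').imp
      fun x ⟨hxW, hx⟩ => ⟨hWU i (subset_closure hxW), hx⟩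
  refine lt_of_add_lt_add_right (hcr.trans_le (hsep.trans (add_le_add_right ?_ _)))
  rw [← ENNReal.ofReal_coe_nnreal]
  exact ENNReal.ofReal_le_ofReal (by linarith)

theorem HasFineCover.exists_pos_forall_hasFineCover {X : Type*} [MetricSpace X] [CompactSpace X]
    {n N M : ℕ} (h : HasFineCover X n N M) :
    ∃ η > 0, ∀ {Y : Type u} {Z : Type v} [MetricSpace Y] [MetricSpace Z]
      {Φ : X → Z} {Ψ : Y → Z}, Isometry Φ → Isometry Ψ → (∀ y, ∃ x, dist (Φ x) (Ψ y) < η) →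
      HasFineCover Y n N M := by
  obtain ⟨k, U, hUo, hUc, hUd, hUs⟩ := h
  obtain ⟨W, hWc, -, hWU⟩ := exists_iUnion_eq_closure_subset hUo (fun _ => toFinite _) hUc
  have hdiam : ∀ᶠ η in 𝓝[>] (0 : ℝ), ∀ i, η < (1 / N - diam (U i)) / 2 := eventually_all.2
    fun i => eventually_nhdsWithin_of_eventually_nhds <| eventually_lt_nhds <| by linarith [hUd i]
  have hsep : ∀ᶠ η in 𝓝[>] (0 : ℝ), ∀ s : Finset (Fin k), s.card = n + 2 → ∀ i ∈ s,
      ∀ {Y : Type u} {Z : Type v} [MetricSpace Y] [MetricSpace Z] {Φ : X → Z} {Ψ : Y → Z},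
      Isometry Φ → Isometry Ψ → (∀ y, ∃ x, dist (Φ x) (Ψ y) < η) →
      (M : ℝ≥0∞)⁻¹ < ⨅ x' ∈ Ψ ⁻¹' thickening η (Φ '' W i),
        ⨅ y' ∈ ⋂ j ∈ s.erase i, Ψ ⁻¹' thickening η (Φ '' W j), edist x' y' :=
    eventually_all.2 fun s => eventually_imp_distrib_left.2 fun hs => (eventually_all_finset s).2
      fun i hi => eventually_lt_iInf_edist_preimage_thickening_image hWU i _ (hUs s hs i hi)
  obtain ⟨η, ⟨hη, hdiam⟩, hsep⟩ :=
    (((eventually_mem_nhdsWithin (s := Ioi 0)).and hdiam).and hsep).exists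
  refine ⟨η, hη, fun {Y Z} _ _ Φ Ψ hΦ hΨ hΦΨ => ⟨k, fun i => Ψ ⁻¹' thickening η (Φ '' W i),
    fun i => isOpen_thickening.preimage hΨ.continuous,
    iUnion_preimage_thickening_image_eq_univ hWc hΦΨ, fun i => ?_,
    fun s hs i hi => hsep s hs i hi hΦ hΨ hΦΨ⟩⟩
  have hWUi : diam (W i) ≤ diam (U i) :=
    diam_mono (subset_closure.trans (hWU i)) isBounded_of_compactSpace
  exact (diam_preimage_thickening_image_le hΦ hΨ isBounded_of_compactSpace hη.le).trans_lt
    (by linarith [hdiam i])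

theorem GromovHausdorff.exists_dist_optimalGHInjl_optimalGHInjr_lt {X Y : Type*} [MetricSpace X]
    [CompactSpace X] [Nonempty X] [MetricSpace Y] [CompactSpace Y] [Nonempty Y] {η : ℝ}
    (h : ghDist X Y < η) (y : Y) :
    ∃ x, dist (optimalGHInjl X Y x) (optimalGHInjr X Y y) < η := by
  have hfin : hausdorffEDist (range (optimalGHInjl X Y)) (range (optimalGHInjr X Y)) ≠ ⊤ :=
    hausdorffEDist_ne_top_of_nonempty_of_bounded (range_nonempty _) (range_nonempty _)
      (isCompact_range (isometry_optimalGHInjl X Y).continuous).isBounded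
      (isCompact_range (isometry_optimalGHInjr X Y).continuous).isBounded
  rw [← hausdorffDist_optimal] at h
  obtain ⟨_, ⟨x, rfl⟩, hx⟩ := exists_dist_lt_of_hausdorffDist_lt' (mem_range_self y) h hfin
  exact ⟨x, hx⟩

theorem isOpen_hasFineCover_general (n N M : ℕ) :
    IsOpen {p : GromovHausdorff.GHSpace | HasFineCover p.Rep n N M} := by
  refine Metric.isOpen_iff.2 fun p hp => ?_
  obtain ⟨η, hη, hnear⟩ := HasFineCover.exists_pos_forall_hasFineCover hp
  refine ⟨η, hη, fun q hq => hnear (isometry_optimalGHInjl _ _) (isometry_optimalGHInjr _ _) ?_⟩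
  rw [mem_ball, dist_comm, dist_ghDist] at hq
  exact exists_dist_optimalGHInjl_optimalGHInjr_lt hq

/-- For a fixed nonnegative integer `n` and positive integers `N`, `M`, the set `𝓜^N_M` of
isometry classes of nonempty compact metric spaces admitting a fine cover as above is open in the
Gromov–Hausdorff space. -/
theorem isOpen_hasFineCover (n N M : ℕ) (hN : 0 < N) (hM : 0 < M) :
    IsOpen {p : GromovHausdorff.GHSpace | HasFineCover p.Rep n N M} :=
  isOpen_hasFineCover_general n N M
end
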